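/- arXiv:2211.01649 — 3 statements merged into one kernel-verified Lean document; each statement's English description precedes it below -/
import Mathlib

section
/- Axisymmetric functions are preserved by the linearized collision operator: if f : ℝ³ → ℝ has the form f(ζ) = f̃(ζ_a, |ζ̄|) for some function f̃ of two variables, then there exists a function L₀(f) of two variables such that L(f)(ζ) = L₀(f)(ζ_a, |ζ̄|) for all ζ ∈ ℝ³. -/
open MeasureTheory Real Filter

noncomputable section

/-- The velocity space `ℝ³`. -/
abbrev V3 : Type := EuclideanSpace ℝ (Fin 3)

/-- Surface measure (2-dimensional Hausdorff measure), used for sphere integrals. -/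
abbrev surf : Measure V3 := μH[2]

/-- The Gaussian weight `E(ζ) = π^{-3/2} exp(-|ζ|²)`. -/
def Egauss (ζ : V3) : ℝ := Real.pi ^ (-(3 : ℝ) / 2) * Real.exp (-‖ζ‖ ^ 2)

/-- The Gaussian-weighted bracket `⟨g⟩ = ∫ g(ζ) E(ζ) dζ`. -/
def gint (g : V3 → ℝ) : ℝ := ∫ ζ : V3, g ζ * Egauss ζ

/-- The integrand of the Boltzmann collision operator (for fixed `ζ`, integration
variables `ζs ∈ ℝ³` and `e ∈ S²`), with kernel `B`. -/
def collKer (B : ℝ → ℝ → ℝ) (F G : V3 → ℝ) (ζ ζs e : V3) : ℝ :=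
  Egauss ζs *
    (F (ζs - (inner ℝ (ζs - ζ) e : ℝ) • e) * G (ζ + (inner ℝ (ζs - ζ) e : ℝ) • e)
      + F (ζ + (inner ℝ (ζs - ζ) e : ℝ) • e) * G (ζs - (inner ℝ (ζs - ζ) e : ℝ) • e)
      - F ζs * G ζ - F ζ * G ζs)
    * B (|(inner ℝ e (ζs - ζ) : ℝ)| / ‖ζs - ζ‖) ‖ζs - ζ‖

/-- The Boltzmann collision operator `J(F,G)` with kernel `B`. -/
def collJ (B : ℝ → ℝ → ℝ) (F G : V3 → ℝ) (ζ : V3) : ℝ :=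
  (1 / 2) * ∫ ζs : V3, ∫ e in Metric.sphere (0 : V3) 1, collKer B F G ζ ζs e ∂surf

/-- The linearized collision operator `L(φ) = 2 J(1, φ)`. -/
def collL (B : ℝ → ℝ → ℝ) (φ : V3 → ℝ) (ζ : V3) : ℝ := 2 * collJ B (fun _ => 1) φ ζ

/-!
`L` commutes with every linear isometry `R` of `ℝ³`: the collision integrand is built from inner
products and norms only, and both Lebesgue measure and surface measure on the sphere are
`R`-invariant. An axisymmetric `f` is invariant under the isometries fixing `a`, hence so is `L f`.
Two points with the same `(ζ_a, |ζ̄|)` differ by such an isometry (a reflection swapping their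
components orthogonal to `a`), so `L f` factors through `(ζ_a, |ζ̄|)`.
-/

/-- The pair `(ζ_a, |ζ̄|)`. -/
def axialCoords {E : Type*} [NormedAddCommGroup E] [InnerProductSpace ℝ E] (a ζ : E) : ℝ × ℝ :=
  (inner ℝ ζ a, ‖ζ - (inner ℝ ζ a : ℝ) • a‖)

section Axial

variable {E : Type*} [NormedAddCommGroup E] [InnerProductSpace ℝ E]

theorem axialCoords_comp_of_apply_eq_self {a : E} {R : E ≃ₗᵢ[ℝ] E} (hRa : R a = a) :
    axialCoords a ∘ R = axialCoords a := by
  funext ζ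
  have hinner : (inner ℝ (R ζ) a : ℝ) = inner ℝ ζ a := by
    rw [← R.inner_map_map ζ a, hRa]
  simp only [Function.comp_apply, axialCoords, hinner, ← R.norm_map (ζ - _), map_sub,
    R.map_smul, hRa]

theorem exists_linearIsometryEquiv_fix_apply_eq {a u w : E} (hu : inner ℝ a u = 0)
    (hw : inner ℝ a w = 0) (huw : ‖u‖ = ‖w‖) :
    ∃ R : E ≃ₗᵢ[ℝ] E, R a = a ∧ R u = w := by
  refine ⟨Submodule.reflection (ℝ ∙ (u - w))ᗮ, ?_, Submodule.reflection_sub huw⟩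
  apply Submodule.reflection_mem_subspace_eq_self
  rw [Submodule.mem_orthogonal_singleton_iff_inner_left, inner_sub_right, hu, hw, sub_zero]

theorem exists_linearIsometryEquiv_fix_apply_eq_of_axialCoords_eq {a ζ ξ : E} (ha : ‖a‖ = 1)
    (h : axialCoords a ζ = axialCoords a ξ) :
    ∃ R : E ≃ₗᵢ[ℝ] E, R a = a ∧ R ζ = ξ := by
  obtain ⟨ht, hr⟩ := Prod.ext_iff.1 h
  simp only [axialCoords] at ht hr
  have horth : ∀ v : E, inner ℝ a (v - (inner ℝ v a : ℝ) • a) = 0 := fun v => by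
    rw [inner_sub_right, real_inner_smul_right, real_inner_self_eq_norm_sq, ha,
      real_inner_comm]
    ring
  obtain ⟨R, hRa, hRu⟩ := exists_linearIsometryEquiv_fix_apply_eq (horth ζ) (horth ξ) hr
  refine ⟨R, hRa, ?_⟩
  rw [ht, map_sub, R.map_smul, hRa, sub_eq_iff_eq_add, ← ht] at hRu
  rw [hRu, sub_add_cancel]

theorem factorsThrough_axialCoords {β : Type*} {a : E} (ha : ‖a‖ = 1) {g : E → β}
    (hg : ∀ R : E ≃ₗᵢ[ℝ] E, R a = a → ∀ ζ, g (R ζ) = g ζ) :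
    g.FactorsThrough (axialCoords a) := fun ζ ξ h => by
  obtain ⟨R, hRa, rfl⟩ := exists_linearIsometryEquiv_fix_apply_eq_of_axialCoords_eq ha h
  exact (hg R hRa ζ).symm

end Axial

theorem LinearIsometryEquiv.setIntegral_sphere_comp {F G : Type*} [NormedAddCommGroup F]
    [NormedSpace ℝ F] [MeasurableSpace F] [BorelSpace F] [NormedAddCommGroup G]
    [NormedSpace ℝ G] (R : F ≃ₗᵢ[ℝ] F) (d r : ℝ) (g : F → G) :
    ∫ e in Metric.sphere (0 : F) r, g (R e) ∂μH[d] =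
      ∫ e in Metric.sphere (0 : F) r, g e ∂μH[d] := by
  have h := (R.toIsometryEquiv.measurePreserving_hausdorffMeasure d).setIntegral_preimage_emb
    R.toHomeomorph.measurableEmbedding g (Metric.sphere 0 r)
  simpa using h

theorem collKer_comp (B : ℝ → ℝ → ℝ) (F G : V3 → ℝ) (R : V3 ≃ₗᵢ[ℝ] V3) (ζ ζs e : V3) :
    collKer B F G (R ζ) (R ζs) (R e) = collKer B (F ∘ R) (G ∘ R) ζ ζs e := by
  simp only [collKer, Egauss, Function.comp_apply, ← map_sub R, ← map_smul R, ← map_add R,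
    LinearIsometryEquiv.inner_map_map, LinearIsometryEquiv.norm_map]

theorem collJ_comp (B : ℝ → ℝ → ℝ) (F G : V3 → ℝ) (R : V3 ≃ₗᵢ[ℝ] V3) (ζ : V3) :
    collJ B F G (R ζ) = collJ B (F ∘ R) (G ∘ R) ζ := by
  unfold collJ
  congr 1
  rw [← (R.measurePreserving.integral_comp R.toHomeomorph.measurableEmbedding _)]
  congr 1
  funext ζs
  rw [← R.setIntegral_sphere_comp]
  simp only [collKer_comp]

theorem collL_comp (B : ℝ → ℝ → ℝ) (f : V3 → ℝ) (R : V3 ≃ₗᵢ[ℝ] V3) (ζ : V3) :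
    collL B f (R ζ) = collL B (f ∘ R) ζ := by
  rw [collL, collJ_comp]
  rfl

theorem collL_axisymmetric_general (B : ℝ → ℝ → ℝ) (a : V3) (ha : ‖a‖ = 1)
    (f : V3 → ℝ) (ftilde : ℝ → ℝ → ℝ)
    (hf : ∀ ζ : V3, f ζ = ftilde (inner ℝ ζ a : ℝ) ‖ζ - (inner ℝ ζ a : ℝ) • a‖) :
    ∃ L0 : ℝ → ℝ → ℝ, ∀ ζ : V3,
      collL B f ζ = L0 (inner ℝ ζ a : ℝ) ‖ζ - (inner ℝ ζ a : ℝ) • a‖ := by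
  have hf' : f = Function.uncurry ftilde ∘ axialCoords a := funext hf
  have hfR : ∀ R : V3 ≃ₗᵢ[ℝ] V3, R a = a → f ∘ R = f := fun R hRa => by
    rw [hf', Function.comp_assoc, axialCoords_comp_of_apply_eq_self hRa]
  obtain ⟨L, hL⟩ := (Function.factorsThrough_iff _).1 <|
    factorsThrough_axialCoords (g := collL B f) ha fun R hRa ζ => by rw [collL_comp, hfR R hRa]
  exact ⟨fun x y => L (x, y), congrFun hL⟩

/-- Axisymmetric functions are preserved by the linearized collision
operator: if `f(ζ) = f̃(ζ_a, |ζ̄|)` (where `ζ_a = ζ·a`, `ζ̄ = ζ - ζ_a a`, `a` a unit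
vector), then `L(f)(ζ) = L₀(f)(ζ_a, |ζ̄|)` for some function `L₀(f)` of two variables. -/
theorem collL_axisymmetric (B : ℝ → ℝ → ℝ) (a : V3) (ha : ‖a‖ = 1)
    (f : V3 → ℝ) (hmeas : Measurable f) (ftilde : ℝ → ℝ → ℝ)
    (hf : ∀ ζ : V3, f ζ = ftilde (inner ℝ ζ a : ℝ) ‖ζ - (inner ℝ ζ a : ℝ) • a‖) :
    ∃ L0 : ℝ → ℝ → ℝ, ∀ ζ : V3,
      collL B f ζ = L0 (inner ℝ ζ a : ℝ) ‖ζ - (inner ℝ ζ a : ℝ) • a‖ :=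
  collL_axisymmetric_general B a ha f ftilde hf
end
end

section
/- Boundary reciprocity of the homogeneous Maxwell condition: suppose ψ^I, ψ^II : ℝ³ → ℝ (integrable against (1+|ζ|)E(ζ)) each satisfy, for every ζ with ζ·n > 0, ψ(ζ) = (1−α) ψ(ζ − 2(ζ·n)n) + α K(ψ). Then ∫_{ℝ³} (ζ·n) ψ^I(−ζ) ψ^II(ζ) E(ζ) dζ = 0. -/
/-!
Fold the half-space `ζ·n < 0` onto `ζ·n > 0` by `ζ ↦ -ζ`: the integrand becomes
`(ζ·n) E(ζ) (ψᴵ(-ζ) ψᴵᴵ(ζ) - ψᴵ(ζ) ψᴵᴵ(-ζ))` on `ζ·n > 0`. The reflection `ζ ↦ 2(ζ·n)n - ζ`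
preserves this half-space, `ζ·n` and `E`, so the integrand may be averaged with its reflected
copy. Inserting the boundary condition at `ζ` and at its reflection, the specular terms cancel
pointwise; what remains is `α K(ψᴵᴵ)` times twice `∫_{ζ·n<0} (ζ·n) ψᴵ E`, minus the same with
`I` and `II` exchanged. Each of these integrals is the same multiple of the corresponding `K`, so
the two terms cancel.
-/

open MeasureTheory Real Filter

noncomputable section

open scoped RealInnerProductSpace

section Reflection

open Submodule

variable {E : Type*} [NormedAddCommGroup E] [InnerProductSpace ℝ E]

theorem inner_reflection_span_singleton_left (n ζ : E) :
    ⟪reflection (ℝ ∙ n) ζ, n⟫ = ⟪ζ, n⟫ := by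
  calc ⟪reflection (ℝ ∙ n) ζ, n⟫ = ⟪reflection (ℝ ∙ n) ζ, reflection (ℝ ∙ n) n⟫ := by
        rw [reflection_mem_subspace_eq_self (mem_span_singleton_self n)]
    _ = ⟪ζ, n⟫ := LinearIsometryEquiv.inner_map_map _ _ _

theorem inner_neg_reflection_span_singleton_left (n ζ : E) :
    ⟪-reflection (ℝ ∙ n) ζ, n⟫ = -⟪ζ, n⟫ := by
  rw [inner_neg_left, inner_reflection_span_singleton_left]

theorem neg_reflection_span_singleton_apply {n : E} (hn : ‖n‖ = 1) (ζ : E) :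
    -reflection (ℝ ∙ n) ζ = ζ - (2 * ⟪ζ, n⟫) • n := by
  rw [reflection_singleton_apply, hn, real_inner_comm]
  simp only [RCLike.ofReal_real_eq_id, id, one_pow, div_one, neg_sub]
  module

/-- The Maxwell condition with the diffuse re-emission `K(ψ)` frozen to a constant `k`. -/
def MaxwellBC (n : E) (α k : ℝ) (ψ : E → ℝ) : Prop :=
  ∀ ζ, 0 < ⟪ζ, n⟫ → ψ ζ = (1 - α) * ψ (ζ - (2 * ⟪ζ, n⟫) • n) + α * k

variable {n : E} {α k kI kII : ℝ} {ψ ψI ψII : E → ℝ} {ζ : E}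

theorem MaxwellBC.apply_eq (hn : ‖n‖ = 1) (h : MaxwellBC n α k ψ) (hζ : 0 < ⟪ζ, n⟫) :
    ψ ζ = (1 - α) * ψ (-reflection (ℝ ∙ n) ζ) + α * k := by
  rw [neg_reflection_span_singleton_apply hn]
  exact h ζ hζ

theorem MaxwellBC.apply_reflection_eq (hn : ‖n‖ = 1) (h : MaxwellBC n α k ψ) (hζ : 0 < ⟪ζ, n⟫) :
    ψ (reflection (ℝ ∙ n) ζ) = (1 - α) * ψ (-ζ) + α * k := by
  have := h.apply_eq hn (ζ := reflection (ℝ ∙ n) ζ) (by rwa [inner_reflection_span_singleton_left])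
  rwa [reflection_reflection] at this

theorem MaxwellBC.skew_add_skew_reflection (hn : ‖n‖ = 1) (hI : MaxwellBC n α kI ψI)
    (hII : MaxwellBC n α kII ψII) (hζ : 0 < ⟪ζ, n⟫) :
    (ψI (-ζ) * ψII ζ - ψI ζ * ψII (-ζ))
        + (ψI (-reflection (ℝ ∙ n) ζ) * ψII (reflection (ℝ ∙ n) ζ)
          - ψI (reflection (ℝ ∙ n) ζ) * ψII (-reflection (ℝ ∙ n) ζ))
      = α * (kII * (ψI (-ζ) + ψI (-reflection (ℝ ∙ n) ζ))
          - kI * (ψII (-ζ) + ψII (-reflection (ℝ ∙ n) ζ))) := by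
  rw [hI.apply_eq hn hζ, hII.apply_eq hn hζ, hI.apply_reflection_eq hn hζ,
    hII.apply_reflection_eq hn hζ]
  ring

end Reflection

section HalfSpace

open Submodule

variable {E : Type*} [NormedAddCommGroup E] [InnerProductSpace ℝ E] [MeasurableSpace E]
  [BorelSpace E]

theorem MeasureTheory.Integrable.inner_mul_mul_of_one_add_norm_mul_mul {μ : Measure E}
    {ψ ρ : E → ℝ} (n : E)
    (h : Integrable (fun ζ => (1 + ‖ζ‖) * ψ ζ * ρ ζ) μ) :
    Integrable (fun ζ => ⟪ζ, n⟫ * ψ ζ * ρ ζ) μ := by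
  have hpos : ∀ ζ : E, 0 < 1 + ‖ζ‖ := fun ζ => by positivity
  have hmeas : AEStronglyMeasurable (fun ζ : E => ⟪ζ, n⟫ / (1 + ‖ζ‖)) μ :=
    ((continuous_id.inner continuous_const).div (continuous_const.add continuous_norm)
      fun ζ => (hpos ζ).ne').aestronglyMeasurable
  have hbound : ∀ ζ : E, ‖⟪ζ, n⟫ / (1 + ‖ζ‖)‖ ≤ ‖n‖ := fun ζ => by
    rw [norm_div, Real.norm_of_nonneg (hpos ζ).le, div_le_iff₀ (hpos ζ), Real.norm_eq_abs]
    nlinarith [abs_real_inner_le_norm ζ n, norm_nonneg n]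
  refine (h.bdd_mul hmeas (ae_of_all _ hbound)).congr (ae_of_all _ fun ζ => ?_)
  field_simp [(hpos ζ).ne']

variable [FiniteDimensional ℝ E]

theorem volume_setOf_inner_eq_zero {n : E} (hn : n ≠ 0) : volume {ζ : E | ⟪ζ, n⟫ = 0} = 0 := by
  have hH : {ζ : E | ⟪ζ, n⟫ = 0} = (ℝ ∙ n)ᗮ := by
    ext ζ
    exact mem_orthogonal_singleton_iff_inner_left.symm
  rw [hH]
  exact Measure.addHaar_submodule _ _ (by simpa [orthogonal_eq_top_iff] using hn)

theorem LinearIsometryEquiv.setIntegral_preimage {F : Type*} [NormedAddCommGroup F]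
    [NormedSpace ℝ F] (S : E ≃ₗᵢ[ℝ] E) (g : E → F) (s : Set E) :
    ∫ ζ in S ⁻¹' s, g (S ζ) = ∫ ξ in s, g ξ :=
  S.measurePreserving.setIntegral_preimage_emb S.toHomeomorph.measurableEmbedding g s

theorem integral_eq_setIntegral_add_comp_neg {n : E} (hn : n ≠ 0) {f : E → ℝ}
    (hf : Integrable f) : ∫ ζ, f ζ = ∫ ζ in {ζ | 0 < ⟪ζ, n⟫}, (f ζ + f (-ζ)) := by
  set P := {ζ : E | 0 < ⟪ζ, n⟫}
  set N := {ξ : E | ⟪ξ, n⟫ < 0}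
  have hP : MeasurableSet P :=
    measurableSet_lt measurable_const (continuous_id.inner continuous_const).measurable
  have hne : ∀ᵐ ζ : E, ⟪ζ, n⟫ ≠ 0 := ae_iff.2 (by simpa using volume_setOf_inner_eq_zero hn)
  have hPc : (Pᶜ : Set E) =ᵐ[volume] N := by
    filter_upwards [hne] with ζ hζ
    simp only [P, N, eq_iff_iff]
    exact ⟨fun h => lt_of_le_of_ne (not_lt.1 h) hζ, fun h => not_lt.2 h.le⟩
  have hNP : (LinearIsometryEquiv.neg ℝ : E ≃ₗᵢ[ℝ] E) ⁻¹' N = P := by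
    ext ζ
    simp [N, P]
  have hfneg : Integrable fun ζ => f (-ζ) := hf.comp_neg
  calc ∫ ζ, f ζ = (∫ ζ in P, f ζ) + ∫ ζ in N, f ζ := by
        rw [← integral_add_compl hP hf, setIntegral_congr_set hPc]
    _ = (∫ ζ in P, f ζ) + ∫ ζ in P, f (-ζ) := by
        rw [← hNP, ← (LinearIsometryEquiv.neg ℝ).setIntegral_preimage f N]
        rfl
    _ = ∫ ζ in P, (f ζ + f (-ζ)) := (integral_add hf.integrableOn hfneg.integrableOn).symm

variable {n : E} {S : E ≃ₗᵢ[ℝ] E} {ψ ρ : E → ℝ}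

theorem MeasureTheory.Integrable.inner_mul_comp_mul (hS : ∀ ζ, ⟪S ζ, n⟫ = -⟪ζ, n⟫)
    (hρ : ∀ ζ, ρ (S ζ) = ρ ζ) (h : Integrable fun ζ => ⟪ζ, n⟫ * ψ ζ * ρ ζ) :
    Integrable fun ζ => ⟪ζ, n⟫ * ψ (S ζ) * ρ ζ := by
  have := (S.measurePreserving.integrable_comp_of_integrable h).neg
  simpa [Function.comp_def, hS, hρ] using this

theorem setIntegral_inner_mul_comp_mul (hS : ∀ ζ, ⟪S ζ, n⟫ = -⟪ζ, n⟫)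
    (hρ : ∀ ζ, ρ (S ζ) = ρ ζ) :
    ∫ ζ in {ζ | 0 < ⟪ζ, n⟫}, ⟪ζ, n⟫ * ψ (S ζ) * ρ ζ
      = -∫ ξ in {ξ | ⟪ξ, n⟫ < 0}, ⟪ξ, n⟫ * ψ ξ * ρ ξ := by
  have hpre : S ⁻¹' {ξ | ⟪ξ, n⟫ < 0} = {ζ | 0 < ⟪ζ, n⟫} := by
    ext ζ
    simp [hS]
  rw [← S.setIntegral_preimage (fun ξ => ⟪ξ, n⟫ * ψ ξ * ρ ξ), hpre, ← integral_neg]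
  simp [hS, hρ]

theorem two_mul_setIntegral_eq_setIntegral_add_comp_reflection {g : E → ℝ}
    (hg : IntegrableOn g {ζ | 0 < ⟪ζ, n⟫}) :
    2 * ∫ ζ in {ζ | 0 < ⟪ζ, n⟫}, g ζ
      = ∫ ζ in {ζ | 0 < ⟪ζ, n⟫}, (g ζ + g (reflection (ℝ ∙ n) ζ)) := by
  set T := reflection (ℝ ∙ n)
  have hT : T ⁻¹' {ζ | 0 < ⟪ζ, n⟫} = {ζ | 0 < ⟪ζ, n⟫} := by
    ext ζ
    simp [T, inner_reflection_span_singleton_left]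
  have hgT : IntegrableOn (fun ζ => g (T ζ)) {ζ | 0 < ⟪ζ, n⟫} := by
    have := (T.measurePreserving.integrableOn_comp_preimage
      T.toHomeomorph.measurableEmbedding).mpr hg
    rwa [hT] at this
  have hinv := T.setIntegral_preimage g {ζ | 0 < ⟪ζ, n⟫}
  rw [hT] at hinv
  rw [integral_add hg hgT, hinv, two_mul]

theorem integrableOn_flux_neg_add_neg_reflection (hρ : ∀ (S : E ≃ₗᵢ[ℝ] E) ζ, ρ (S ζ) = ρ ζ)
    (h : Integrable fun ζ => ⟪ζ, n⟫ * ψ ζ * ρ ζ) :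
    IntegrableOn (fun ζ => ⟪ζ, n⟫ * ψ (-ζ) * ρ ζ + ⟪ζ, n⟫ * ψ (-reflection (ℝ ∙ n) ζ) * ρ ζ)
      {ζ | 0 < ⟪ζ, n⟫} :=
  ((h.inner_mul_comp_mul (S := .neg ℝ) (fun ζ => inner_neg_left ζ n) (hρ _)).add
    (h.inner_mul_comp_mul (S := (reflection (ℝ ∙ n)).trans (.neg ℝ))
      (inner_neg_reflection_span_singleton_left n) (hρ _))).integrableOn

theorem setIntegral_flux_neg_add_neg_reflection (hρ : ∀ (S : E ≃ₗᵢ[ℝ] E) ζ, ρ (S ζ) = ρ ζ)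
    (h : Integrable fun ζ => ⟪ζ, n⟫ * ψ ζ * ρ ζ) :
    ∫ ζ in {ζ | 0 < ⟪ζ, n⟫}, (⟪ζ, n⟫ * ψ (-ζ) * ρ ζ + ⟪ζ, n⟫ * ψ (-reflection (ℝ ∙ n) ζ) * ρ ζ)
      = -2 * ∫ ξ in {ξ | ⟪ξ, n⟫ < 0}, ⟪ξ, n⟫ * ψ ξ * ρ ξ := by
  have hneg := h.inner_mul_comp_mul (S := .neg ℝ) (fun ζ => inner_neg_left ζ n) (hρ _)
  have hrefl := h.inner_mul_comp_mul (S := (reflection (ℝ ∙ n)).trans (.neg ℝ))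
    (inner_neg_reflection_span_singleton_left n) (hρ _)
  have eneg := setIntegral_inner_mul_comp_mul (ψ := ψ) (S := .neg ℝ)
    (fun ζ => inner_neg_left ζ n) (hρ _)
  have erefl := setIntegral_inner_mul_comp_mul (ψ := ψ)
    (S := (reflection (ℝ ∙ n)).trans (.neg ℝ)) (inner_neg_reflection_span_singleton_left n) (hρ _)
  simp only [LinearIsometryEquiv.coe_neg, LinearIsometryEquiv.trans_apply]
    at hneg hrefl eneg erefl
  rw [integral_add hneg.integrableOn hrefl.integrableOn, eneg, erefl]
  ring

end HalfSpace

theorem Egauss_neg (ζ : V3) : Egauss (-ζ) = Egauss ζ := by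
  simp only [Egauss, norm_neg]

theorem Egauss_apply_linearIsometryEquiv (S : V3 ≃ₗᵢ[ℝ] V3) (ζ : V3) :
    Egauss (S ζ) = Egauss ζ := by
  simp only [Egauss, LinearIsometryEquiv.norm_map]

theorem maxwell_bc_reciprocity_general (n : V3) (hn : ‖n‖ = 1)
    (α : ℝ)
    (ψI ψII : V3 → ℝ)
    (hψI : Integrable (fun ζ : V3 => (1 + ‖ζ‖) * ψI ζ * Egauss ζ))
    (hψII : Integrable (fun ζ : V3 => (1 + ‖ζ‖) * ψII ζ * Egauss ζ))
    (hprod : Integrable (fun ζ : V3 => (inner ℝ ζ n : ℝ) * ψI (-ζ) * ψII ζ * Egauss ζ))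
    (hbcI : ∀ ζ : V3, 0 < (inner ℝ ζ n : ℝ) →
      ψI ζ = (1 - α) * ψI (ζ - (2 * (inner ℝ ζ n : ℝ)) • n)
        + α * (-2 * Real.sqrt π *
            ∫ ξ in {ξ : V3 | (inner ℝ ξ n : ℝ) < 0}, (inner ℝ ξ n : ℝ) * ψI ξ * Egauss ξ))
    (hbcII : ∀ ζ : V3, 0 < (inner ℝ ζ n : ℝ) →
      ψII ζ = (1 - α) * ψII (ζ - (2 * (inner ℝ ζ n : ℝ)) • n)
        + α * (-2 * Real.sqrt π *
            ∫ ξ in {ξ : V3 | (inner ℝ ξ n : ℝ) < 0}, (inner ℝ ξ n : ℝ) * ψII ξ * Egauss ξ)) :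
    ∫ ζ : V3, (inner ℝ ζ n : ℝ) * ψI (-ζ) * ψII ζ * Egauss ζ = 0 := by
  set T := Submodule.reflection (ℝ ∙ n)
  set P := {ζ : V3 | 0 < ⟪ζ, n⟫}
  set F := fun ζ : V3 => ⟪ζ, n⟫ * ψI (-ζ) * ψII ζ * Egauss ζ
  set cI := ∫ ξ in {ξ : V3 | ⟪ξ, n⟫ < 0}, ⟪ξ, n⟫ * ψI ξ * Egauss ξ
  set cII := ∫ ξ in {ξ : V3 | ⟪ξ, n⟫ < 0}, ⟪ξ, n⟫ * ψII ξ * Egauss ξ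
  have hE : ∀ (S : V3 ≃ₗᵢ[ℝ] V3) ζ, Egauss (S ζ) = Egauss ζ := Egauss_apply_linearIsometryEquiv
  have hI := hψI.inner_mul_mul_of_one_add_norm_mul_mul n
  have hII := hψII.inner_mul_mul_of_one_add_norm_mul_mul n
  have hsym : ∀ ζ ∈ P, F ζ + F (-ζ) + (F (T ζ) + F (-T ζ))
      = α * ((-2 * √π * cII) * (⟪ζ, n⟫ * ψI (-ζ) * Egauss ζ + ⟪ζ, n⟫ * ψI (-T ζ) * Egauss ζ)
        - (-2 * √π * cI) * (⟪ζ, n⟫ * ψII (-ζ) * Egauss ζ + ⟪ζ, n⟫ * ψII (-T ζ) * Egauss ζ)) := by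
    intro ζ hζ
    have h := MaxwellBC.skew_add_skew_reflection hn hbcI hbcII hζ
    simp only [F, T, inner_neg_left, neg_neg, Egauss_neg, hE, inner_reflection_span_singleton_left]
    linear_combination (⟪ζ, n⟫ * Egauss ζ) * h
  have hfold : 2 * ∫ ζ, F ζ = ∫ ζ in P, (F ζ + F (-ζ) + (F (T ζ) + F (-T ζ))) := by
    have hn0 : n ≠ 0 := ne_zero_of_norm_ne_zero (by simp [hn])
    rw [integral_eq_setIntegral_add_comp_neg hn0 hprod]
    exact two_mul_setIntegral_eq_setIntegral_add_comp_reflection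
      (hprod.add hprod.comp_neg).integrableOn
  rw [setIntegral_congr_fun (measurableSet_lt measurable_const (by fun_prop)) hsym,
    integral_const_mul, integral_sub ((integrableOn_flux_neg_add_neg_reflection hE hI).const_mul _)
      ((integrableOn_flux_neg_add_neg_reflection hE hII).const_mul _),
    integral_const_mul, integral_const_mul, setIntegral_flux_neg_add_neg_reflection hE hI,
    setIntegral_flux_neg_add_neg_reflection hE hII] at hfold
  linear_combination hfold / 2

/-- Boundary reciprocity of the homogeneous Maxwell condition: if
`ψ^I, ψ^II` (integrable against `(1+|ζ|)E(ζ)`) each satisfy, for every `ζ` with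
`ζ·n > 0`, `ψ(ζ) = (1-α) ψ(ζ - 2(ζ·n)n) + α K(ψ)` where
`K(ψ) = -2√π ∫_{ζ·n<0} (ζ·n) ψ E dζ`, then `∫ (ζ·n) ψ^I(-ζ) ψ^II(ζ) E(ζ) dζ = 0`. -/
theorem maxwell_bc_reciprocity (n : V3) (hn : ‖n‖ = 1)
    (α : ℝ) (hα : 0 < α ∧ α ≤ 1)
    (ψI ψII : V3 → ℝ)
    (hψI : Integrable (fun ζ : V3 => (1 + ‖ζ‖) * ψI ζ * Egauss ζ))
    (hψII : Integrable (fun ζ : V3 => (1 + ‖ζ‖) * ψII ζ * Egauss ζ))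
    (hprod : Integrable (fun ζ : V3 => (inner ℝ ζ n : ℝ) * ψI (-ζ) * ψII ζ * Egauss ζ))
    (hbcI : ∀ ζ : V3, 0 < (inner ℝ ζ n : ℝ) →
      ψI ζ = (1 - α) * ψI (ζ - (2 * (inner ℝ ζ n : ℝ)) • n)
        + α * (-2 * Real.sqrt π *
            ∫ ξ in {ξ : V3 | (inner ℝ ξ n : ℝ) < 0}, (inner ℝ ξ n : ℝ) * ψI ξ * Egauss ξ))
    (hbcII : ∀ ζ : V3, 0 < (inner ℝ ζ n : ℝ) →
      ψII ζ = (1 - α) * ψII (ζ - (2 * (inner ℝ ζ n : ℝ)) • n)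
        + α * (-2 * Real.sqrt π *
            ∫ ξ in {ξ : V3 | (inner ℝ ξ n : ℝ) < 0}, (inner ℝ ξ n : ℝ) * ψII ξ * Egauss ξ)) :
    ∫ ζ : V3, (inner ℝ ζ n : ℝ) * ψI (-ζ) * ψII ζ * Egauss ζ = 0 :=
  maxwell_bc_reciprocity_general n hn α ψI ψII hψI hψII hprod hbcI hbcII
end
end

section
/- Similarity form of the flow velocity: fix angles θ, φ and an orthonormal basis (e_r, e_θ, e_φ) of ℝ³, and write ζ_r = ζ·e_r, ζ_θ = ζ·e_θ, ζ_φ = ζ·e_φ. Let U, V, S ∈ ℝ and let A, B, C be functions of two variables such that Φ(ζ) = (U cos θ + V sin θ cos φ) A(ζ_r, |ζ|) + [ζ_θ (U sin θ − V cos θ cos φ) + V ζ_φ sin φ] B(ζ_r, |ζ|) + S ζ_φ sin θ · C(ζ_r, |ζ|) is integrable against (1+|ζ|)E(ζ). Then ⟨ζ_r Φ⟩ = (U cos θ + V sin θ cos φ) ⟨ζ_r A(ζ_r,|ζ|)⟩, ⟨ζ_θ Φ⟩ = (U sin θ − V cos θ cos φ) · (1/2) ⟨(|ζ|² − ζ_r²)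 B(ζ_r,|ζ|)⟩, and ⟨ζ_φ Φ⟩ = V sin φ · (1/2) ⟨(|ζ|² − ζ_r²) B(ζ_r,|ζ|)⟩ + S sin θ · (1/2) ⟨(|ζ|² − ζ_r²) C(ζ_r,|ζ|)⟩. -/
open MeasureTheory Real Filter

noncomputable section

/-!
The reflections of `ℝ³` in the planes orthogonal to `e_θ` and to `e_φ` preserve `E(ζ)`, `ζ_r` and
`|ζ|` and flip the sign of one of `ζ_θ`, `ζ_φ`; averaging a bracket over both of them kills every
term of `ζ_i Φ` that is odd in `ζ_θ` or `ζ_φ`. The reflection in the plane orthogonal to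
`e_θ - e_φ` exchanges `ζ_θ` and `ζ_φ`, so `⟨ζ_θ² F⟩ = ⟨ζ_φ² F⟩` for `F = F(ζ_r, |ζ|)`, and
since `ζ_θ² + ζ_φ² = |ζ|² - ζ_r²` each of them is half of `⟨(|ζ|² - ζ_r²) F⟩`.
-/

open Submodule
open scoped RealInnerProductSpace

section InnerProductSpace

variable {E : Type*} [NormedAddCommGroup E] [InnerProductSpace ℝ E]

theorem Orthonormal.sum_sq_inner_eq_norm_sq {ι : Type*} [Fintype ι] [FiniteDimensional ℝ E]
    {v : ι → E} (hv : Orthonormal ℝ v) (hcard : Fintype.card ι = Module.finrank ℝ E) (x : E) :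
    ∑ i, ⟪x, v i⟫ ^ 2 = ‖x‖ ^ 2 := by
  have hspan := (hv.linearIndependent.span_eq_top_of_card_eq_finrank' hcard).ge
  simpa [OrthonormalBasis.coe_mk] using (OrthonormalBasis.mk hv hspan).sum_sq_inner_left x

theorem inner_reflection_orthogonal_singleton_self (u x : E) :
    ⟪reflection (ℝ ∙ u)ᗮ x, u⟫ = -⟪x, u⟫ := by
  have h := (reflection (ℝ ∙ u)ᗮ).inner_map_map x u
  rw [reflection_orthogonalComplement_singleton_eq_neg, inner_neg_right] at h
  linarith

theorem inner_reflection_orthogonal_singleton_of_inner_eq_zero {u v : E} (h : ⟪u, v⟫ = 0)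
    (x : E) : ⟪reflection (ℝ ∙ u)ᗮ x, v⟫ = ⟪x, v⟫ := by
  simpa only [reflection_mem_subspace_eq_self (mem_orthogonal_singleton_iff_inner_right.mpr h)]
    using (reflection (ℝ ∙ u)ᗮ).inner_map_map x v

theorem inner_reflection_sub {v w : E} (h : ‖v‖ = ‖w‖) (x : E) :
    ⟪reflection (ℝ ∙ (v - w))ᗮ x, w⟫ = ⟪x, v⟫ := by
  simpa only [reflection_sub h] using (reflection (ℝ ∙ (v - w))ᗮ).inner_map_map x v

theorem norm_inner_le_norm_mul_one_add_norm (x u : E) : ‖⟪x, u⟫‖ ≤ ‖u‖ * (1 + ‖x‖) := by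
  nlinarith [norm_inner_le_norm (𝕜 := ℝ) x u, norm_nonneg x, norm_nonneg u]

variable [MeasurableSpace E] [OpensMeasurableSpace E] {μ : Measure E} {g w : E → ℝ}

theorem integrable_inner_mul_of_integrable_one_add_norm_mul
    (h : Integrable (fun x => (1 + ‖x‖) * g x * w x) μ) (u : E) :
    Integrable (fun x => ⟪x, u⟫ * g x * w x) μ := by
  have hpos (x : E) : 0 < 1 + ‖x‖ := by positivity
  refine (h.bdd_mul (f := fun x => ⟪x, u⟫ / (1 + ‖x‖)) (c := ‖u‖) ?_
    (.of_forall fun x => ?_)).congr (.of_forall fun x => ?_)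
  · exact ((continuous_id.inner continuous_const).div (continuous_const.add continuous_norm)
      fun x => (hpos x).ne').aestronglyMeasurable
  · rw [norm_div, Real.norm_of_nonneg (hpos x).le, div_le_iff₀ (hpos x)]
    exact norm_inner_le_norm_mul_one_add_norm x u
  · field_simp [(hpos x).ne']

theorem integrable_inner_sq_mul_of_integrable_one_add_norm_sq_mul
    (h : Integrable (fun x => (1 + ‖x‖) ^ 2 * g x * w x) μ) (u : E) :
    Integrable (fun x => ⟪x, u⟫ ^ 2 * g x * w x) μ := by
  have hpos (x : E) : 0 < (1 + ‖x‖) ^ 2 := by positivity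
  refine (h.bdd_mul (f := fun x => ⟪x, u⟫ ^ 2 / (1 + ‖x‖) ^ 2) (c := ‖u‖ ^ 2)
    ?_ (.of_forall fun x => ?_)).congr (.of_forall fun x => ?_)
  · exact (((continuous_id.inner continuous_const).pow 2).div
      ((continuous_const.add continuous_norm).pow 2) fun x => (hpos x).ne').aestronglyMeasurable
  · rw [norm_div, Real.norm_of_nonneg (hpos x).le, div_le_iff₀ (hpos x), norm_pow, ← mul_pow]
    gcongr
    exact norm_inner_le_norm_mul_one_add_norm x u
  · field_simp [(hpos x).ne']

end InnerProductSpace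

section GaussianBracket

variable {f g : V3 → ℝ}

theorem Egauss_map (R : V3 ≃ₗᵢ[ℝ] V3) (ζ : V3) : Egauss (R ζ) = Egauss ζ := by
  simp only [Egauss, LinearIsometryEquiv.norm_map]

theorem gint_comp_linearIsometryEquiv (R : V3 ≃ₗᵢ[ℝ] V3) (g : V3 → ℝ) :
    gint (fun ζ => g (R ζ)) = gint g := by
  simpa only [gint, Egauss_map] using
    R.measurePreserving.integral_comp R.toHomeomorph.measurableEmbedding (fun ζ => g ζ * Egauss ζ)

theorem integrable_comp_linearIsometryEquiv_mul_Egauss (R : V3 ≃ₗᵢ[ℝ] V3)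
    (hg : Integrable fun ζ => g ζ * Egauss ζ) : Integrable fun ζ => g (R ζ) * Egauss ζ := by
  simpa only [Function.comp_def, Egauss_map] using
    R.measurePreserving.integrable_comp_of_integrable hg

theorem gint_const_mul (c : ℝ) (g : V3 → ℝ) : gint (fun ζ => c * g ζ) = c * gint g := by
  simp only [gint, mul_assoc, integral_const_mul]

theorem gint_add (hf : Integrable fun ζ => f ζ * Egauss ζ)
    (hg : Integrable fun ζ => g ζ * Egauss ζ) :
    gint (fun ζ => f ζ + g ζ) = gint f + gint g := by
  simp only [gint, add_mul]
  exact integral_add hf hg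

theorem gint_const_mul_add_const_mul (a b : ℝ) (hf : Integrable fun ζ => f ζ * Egauss ζ)
    (hg : Integrable fun ζ => g ζ * Egauss ζ) :
    gint (fun ζ => a * f ζ + b * g ζ) = a * gint f + b * gint g := by
  rw [gint_add (by simpa only [mul_assoc] using hf.const_mul a)
    (by simpa only [mul_assoc] using hg.const_mul b), gint_const_mul, gint_const_mul]

theorem gint_eq_gint_half_add_comp (R : V3 ≃ₗᵢ[ℝ] V3) (hg : Integrable fun ζ => g ζ * Egauss ζ) :
    gint g = gint fun ζ => (g ζ + g (R ζ)) / 2 := by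
  simp only [div_eq_inv_mul]
  rw [gint_const_mul, gint_add hg (integrable_comp_linearIsometryEquiv_mul_Egauss R hg),
    gint_comp_linearIsometryEquiv]
  ring

theorem integrable_half_add_comp_mul_Egauss (R : V3 ≃ₗᵢ[ℝ] V3)
    (hg : Integrable fun ζ => g ζ * Egauss ζ) :
    Integrable fun ζ => (g ζ + g (R ζ)) / 2 * Egauss ζ :=
  ((hg.add (integrable_comp_linearIsometryEquiv_mul_Egauss R hg)).div_const 2).congr
    (.of_forall fun ζ => by simp only [Pi.add_apply]; ring)

theorem gint_eq_gint_average_comp_comp (R₁ R₂ : V3 ≃ₗᵢ[ℝ] V3)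
    (hg : Integrable fun ζ => g ζ * Egauss ζ) :
    gint g = gint fun ζ =>
      ((g ζ + g (R₁ ζ)) / 2 + (g (R₂ ζ) + g (R₁ (R₂ ζ))) / 2) / 2 :=
  (gint_eq_gint_half_add_comp R₁ hg).trans
    (gint_eq_gint_half_add_comp R₂ (integrable_half_add_comp_mul_Egauss R₁ hg))

theorem gint_inner_sq_mul_eq_half_of_sum_sq {er e₁ e₂ : V3} (hnorm : ‖e₁‖ = ‖e₂‖)
    (h₁ : ⟪e₁, er⟫ = 0) (h₂ : ⟪e₂, er⟫ = 0)
    (hsum : ∀ ζ : V3, ⟪ζ, e₁⟫ ^ 2 + ⟪ζ, e₂⟫ ^ 2 = ‖ζ‖ ^ 2 - ⟪ζ, er⟫ ^ 2)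
    {F : ℝ → ℝ → ℝ} (hF : Integrable fun ζ : V3 => (1 + ‖ζ‖) ^ 2 * F ⟪ζ, er⟫ ‖ζ‖ * Egauss ζ) :
    gint (fun ζ => ⟪ζ, e₁⟫ ^ 2 * F ⟪ζ, er⟫ ‖ζ‖)
      = 1 / 2 * gint (fun ζ => (‖ζ‖ ^ 2 - ⟪ζ, er⟫ ^ 2) * F ⟪ζ, er⟫ ‖ζ‖) := by
  have h₁₂ : ⟪e₁ - e₂, er⟫ = 0 := by rw [inner_sub_left, h₁, h₂, sub_zero]
  have hswap : gint (fun ζ => ⟪ζ, e₂⟫ ^ 2 * F ⟪ζ, er⟫ ‖ζ‖)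
      = gint (fun ζ => ⟪ζ, e₁⟫ ^ 2 * F ⟪ζ, er⟫ ‖ζ‖) := by
    rw [← gint_comp_linearIsometryEquiv (reflection (ℝ ∙ (e₁ - e₂))ᗮ)]
    simp only [inner_reflection_sub hnorm,
      inner_reflection_orthogonal_singleton_of_inner_eq_zero h₁₂, LinearIsometryEquiv.norm_map]
  simp only [← hsum, add_mul]
  rw [gint_add (integrable_inner_sq_mul_of_integrable_one_add_norm_sq_mul hF e₁)
    (integrable_inner_sq_mul_of_integrable_one_add_norm_sq_mul hF e₂), hswap]
  ring

theorem Orthonormal.gint_inner_sq_mul_eq_half {er e₁ e₂ : V3} (hON : Orthonormal ℝ ![er, e₁, e₂])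
    {F : ℝ → ℝ → ℝ} (hF : Integrable fun ζ : V3 => (1 + ‖ζ‖) ^ 2 * F ⟪ζ, er⟫ ‖ζ‖ * Egauss ζ) :
    gint (fun ζ => ⟪ζ, e₁⟫ ^ 2 * F ⟪ζ, er⟫ ‖ζ‖)
        = 1 / 2 * gint (fun ζ => (‖ζ‖ ^ 2 - ⟪ζ, er⟫ ^ 2) * F ⟪ζ, er⟫ ‖ζ‖) ∧
      gint (fun ζ => ⟪ζ, e₂⟫ ^ 2 * F ⟪ζ, er⟫ ‖ζ‖)
        = 1 / 2 * gint (fun ζ => (‖ζ‖ ^ 2 - ⟪ζ, er⟫ ^ 2) * F ⟪ζ, er⟫ ‖ζ‖) := by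
  have h₁ : ‖e₁‖ = 1 := hON.1 1
  have h₂ : ‖e₂‖ = 1 := hON.1 2
  have h₁r : ⟪e₁, er⟫ = 0 := hON.inner_eq_zero (i := 1) (j := 0) (by decide)
  have h₂r : ⟪e₂, er⟫ = 0 := hON.inner_eq_zero (i := 2) (j := 0) (by decide)
  have hparseval (ζ : V3) : ⟪ζ, er⟫ ^ 2 + ⟪ζ, e₁⟫ ^ 2 + ⟪ζ, e₂⟫ ^ 2 = ‖ζ‖ ^ 2 := by
    simpa [Fin.sum_univ_three] using hON.sum_sq_inner_eq_norm_sq (by simp) ζ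
  exact ⟨gint_inner_sq_mul_eq_half_of_sum_sq (h₁.trans h₂.symm) h₁r h₂r
      (fun ζ => by linarith [hparseval ζ]) hF,
    gint_inner_sq_mul_eq_half_of_sum_sq (h₂.trans h₁.symm) h₂r h₁r
      (fun ζ => by linarith [hparseval ζ]) hF⟩

end GaussianBracket

theorem similarity_flow_velocity_general
    (er eθ eφ : V3) (hON : Orthonormal ℝ ![er, eθ, eφ])
    (θ ϕ U V S : ℝ) (A Bf C : ℝ → ℝ → ℝ) (Φ : V3 → ℝ)
    (hΦ : ∀ ζ : V3, Φ ζ =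
      (U * Real.cos θ + V * Real.sin θ * Real.cos ϕ) * A (inner ℝ ζ er : ℝ) ‖ζ‖
      + ((inner ℝ ζ eθ : ℝ) * (U * Real.sin θ - V * Real.cos θ * Real.cos ϕ)
          + V * (inner ℝ ζ eφ : ℝ) * Real.sin ϕ) * Bf (inner ℝ ζ er : ℝ) ‖ζ‖
      + S * (inner ℝ ζ eφ : ℝ) * Real.sin θ * C (inner ℝ ζ er : ℝ) ‖ζ‖)
    (hΦint : Integrable (fun ζ : V3 => (1 + ‖ζ‖) * Φ ζ * Egauss ζ))
    (hB : Integrable (fun ζ : V3 => (1 + ‖ζ‖) ^ 2 * Bf (inner ℝ ζ er : ℝ) ‖ζ‖ * Egauss ζ))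
    (hC : Integrable (fun ζ : V3 => (1 + ‖ζ‖) ^ 2 * C (inner ℝ ζ er : ℝ) ‖ζ‖ * Egauss ζ)) :
    gint (fun ζ => (inner ℝ ζ er : ℝ) * Φ ζ)
      = (U * Real.cos θ + V * Real.sin θ * Real.cos ϕ)
          * gint (fun ζ => (inner ℝ ζ er : ℝ) * A (inner ℝ ζ er : ℝ) ‖ζ‖) ∧
    gint (fun ζ => (inner ℝ ζ eθ : ℝ) * Φ ζ)
      = (U * Real.sin θ - V * Real.cos θ * Real.cos ϕ)
          * ((1 / 2) * gint (fun ζ => (‖ζ‖ ^ 2 - (inner ℝ ζ er : ℝ) ^ 2) * Bf (inner ℝ ζ er : ℝ) ‖ζ‖)) ∧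
    gint (fun ζ => (inner ℝ ζ eφ : ℝ) * Φ ζ)
      = V * Real.sin ϕ
          * ((1 / 2) * gint (fun ζ => (‖ζ‖ ^ 2 - (inner ℝ ζ er : ℝ) ^ 2) * Bf (inner ℝ ζ er : ℝ) ‖ζ‖))
        + S * Real.sin θ
          * ((1 / 2) * gint (fun ζ => (‖ζ‖ ^ 2 - (inner ℝ ζ er : ℝ) ^ 2) * C (inner ℝ ζ er : ℝ) ‖ζ‖)) := by
  have hθr : ⟪eθ, er⟫ = 0 := hON.inner_eq_zero (i := 1) (j := 0) (by decide)
  have hφr : ⟪eφ, er⟫ = 0 := hON.inner_eq_zero (i := 2) (j := 0) (by decide)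
  have hθφ : ⟪eθ, eφ⟫ = 0 := hON.inner_eq_zero (i := 1) (j := 2) (by decide)
  have hφθ : ⟪eφ, eθ⟫ = 0 := hON.inner_eq_zero (i := 2) (j := 1) (by decide)
  have haverage (u : V3) := gint_eq_gint_average_comp_comp (reflection (ℝ ∙ eθ)ᗮ)
    (reflection (ℝ ∙ eφ)ᗮ) (integrable_inner_mul_of_integrable_one_add_norm_mul hΦint u)
  have hreflect (ζ : V3) :
      ⟪reflection (ℝ ∙ eθ)ᗮ ζ, er⟫ = ⟪ζ, er⟫ ∧ ⟪reflection (ℝ ∙ eθ)ᗮ ζ, eφ⟫ = ⟪ζ, eφ⟫ ∧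
      ⟪reflection (ℝ ∙ eφ)ᗮ ζ, er⟫ = ⟪ζ, er⟫ ∧ ⟪reflection (ℝ ∙ eφ)ᗮ ζ, eθ⟫ = ⟪ζ, eθ⟫ :=
    ⟨inner_reflection_orthogonal_singleton_of_inner_eq_zero hθr ζ,
      inner_reflection_orthogonal_singleton_of_inner_eq_zero hθφ ζ,
      inner_reflection_orthogonal_singleton_of_inner_eq_zero hφr ζ,
      inner_reflection_orthogonal_singleton_of_inner_eq_zero hφθ ζ⟩
  refine ⟨?_, ?_, ?_⟩
  · rw [haverage er, ← gint_const_mul]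
    congr 1 with ζ
    simp only [hΦ, hreflect, inner_reflection_orthogonal_singleton_self,
      LinearIsometryEquiv.norm_map]
    ring
  · rw [haverage eθ, ← (hON.gint_inner_sq_mul_eq_half hB).1, ← gint_const_mul]
    congr 1 with ζ
    simp only [hΦ, hreflect, inner_reflection_orthogonal_singleton_self,
      LinearIsometryEquiv.norm_map]
    ring
  · rw [haverage eφ, ← (hON.gint_inner_sq_mul_eq_half hB).2,
      ← (hON.gint_inner_sq_mul_eq_half hC).2, ← gint_const_mul_add_const_mul _ _
      (integrable_inner_sq_mul_of_integrable_one_add_norm_sq_mul hB eφ)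
      (integrable_inner_sq_mul_of_integrable_one_add_norm_sq_mul hC eφ)]
    congr 1 with ζ
    simp only [hΦ, hreflect, inner_reflection_orthogonal_singleton_self,
      LinearIsometryEquiv.norm_map]
    ring

/-- Similarity form of the flow velocity: with an orthonormal basis
`(e_r, e_θ, e_φ)` of `ℝ³`, components `ζ_r = ζ·e_r` etc., and
`Φ(ζ) = (U cos θ + V sin θ cos ϕ) A(ζ_r,|ζ|)
  + [ζ_θ (U sin θ - V cos θ cos ϕ) + V ζ_φ sin ϕ] B(ζ_r,|ζ|) + S ζ_φ sin θ C(ζ_r,|ζ|)`,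
the three velocity brackets `⟨ζ_r Φ⟩, ⟨ζ_θ Φ⟩, ⟨ζ_φ Φ⟩` take the stated similarity
form. -/
theorem similarity_flow_velocity
    (er eθ eφ : V3) (hON : Orthonormal ℝ ![er, eθ, eφ])
    (θ ϕ U V S : ℝ) (A Bf C : ℝ → ℝ → ℝ) (Φ : V3 → ℝ)
    (hΦ : ∀ ζ : V3, Φ ζ =
      (U * Real.cos θ + V * Real.sin θ * Real.cos ϕ) * A (inner ℝ ζ er : ℝ) ‖ζ‖
      + ((inner ℝ ζ eθ : ℝ) * (U * Real.sin θ - V * Real.cos θ * Real.cos ϕ)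
          + V * (inner ℝ ζ eφ : ℝ) * Real.sin ϕ) * Bf (inner ℝ ζ er : ℝ) ‖ζ‖
      + S * (inner ℝ ζ eφ : ℝ) * Real.sin θ * C (inner ℝ ζ er : ℝ) ‖ζ‖)
    (hΦint : Integrable (fun ζ : V3 => (1 + ‖ζ‖) * Φ ζ * Egauss ζ))
    (hA : Integrable (fun ζ : V3 => (1 + ‖ζ‖) ^ 2 * A (inner ℝ ζ er : ℝ) ‖ζ‖ * Egauss ζ))
    (hB : Integrable (fun ζ : V3 => (1 + ‖ζ‖) ^ 2 * Bf (inner ℝ ζ er : ℝ) ‖ζ‖ * Egauss ζ))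
    (hC : Integrable (fun ζ : V3 => (1 + ‖ζ‖) ^ 2 * C (inner ℝ ζ er : ℝ) ‖ζ‖ * Egauss ζ)) :
    gint (fun ζ => (inner ℝ ζ er : ℝ) * Φ ζ)
      = (U * Real.cos θ + V * Real.sin θ * Real.cos ϕ)
          * gint (fun ζ => (inner ℝ ζ er : ℝ) * A (inner ℝ ζ er : ℝ) ‖ζ‖) ∧
    gint (fun ζ => (inner ℝ ζ eθ : ℝ) * Φ ζ)
      = (U * Real.sin θ - V * Real.cos θ * Real.cos ϕ)
          * ((1 / 2) * gint (fun ζ => (‖ζ‖ ^ 2 - (inner ℝ ζ er : ℝ) ^ 2) * Bf (inner ℝ ζ er : ℝ) ‖ζ‖)) ∧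
    gint (fun ζ => (inner ℝ ζ eφ : ℝ) * Φ ζ)
      = V * Real.sin ϕ
          * ((1 / 2) * gint (fun ζ => (‖ζ‖ ^ 2 - (inner ℝ ζ er : ℝ) ^ 2) * Bf (inner ℝ ζ er : ℝ) ‖ζ‖))
        + S * Real.sin θ
          * ((1 / 2) * gint (fun ζ => (‖ζ‖ ^ 2 - (inner ℝ ζ er : ℝ) ^ 2) * C (inner ℝ ζ er : ℝ) ‖ζ‖)) :=
  similarity_flow_velocity_general er eθ eφ hON θ ϕ U V S A Bf C Φ hΦ hΦint hB hC
end
end
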